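/- Let (ω, α) be a Jacobi sequence satisfying lim_{n→∞} ω n / ω(n−1) = 1 and lim_{n→∞} (α n − α(n−1))/√(ω n + ω(n−1)) = c for some real number c, and let X be its Jacobi matrix. Then for all integers m and n, the matrix coefficient ⟨X^{(k)} e_{k+m}, e_{k+n}⟩ of the normalized operator X^{(k)} = (X − α k)/√(ω k + ω(k−1)) converges as k → ∞ to: 1/√2 if m = n − 1, c·n if m = n, 1/√2 if m = n + 1, and 0 if |m − n| ≥ 2. -/

import Mathlib

open Filter

/-- The Jacobi matrix of a Jacobi sequence `(ω, α)`, acting on finitely supported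
real sequences indexed by `ℕ`:
`X e_n = √(ω n)·e_{n+1} + α n·e_n + √(ω (n-1))·e_{n-1}`, last term omitted for `n = 0`. -/
noncomputable def jacobiOp (ω α : ℕ → ℝ) : (ℕ →₀ ℝ) →ₗ[ℝ] (ℕ →₀ ℝ) :=
  Finsupp.lsum ℝ fun n => LinearMap.toSpanSingleton ℝ (ℕ →₀ ℝ)
    (Real.sqrt (ω n) • Finsupp.single (n + 1) 1 + α n • Finsupp.single n 1 +
      if n = 0 then 0 else Real.sqrt (ω (n - 1)) • Finsupp.single (n - 1) 1)

/-- The matrix coefficient `⟨T e_j, e_l⟩` for integer indices, taken to be `0` when an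
index is negative. -/
noncomputable def matrixCoeff (T : (ℕ →₀ ℝ) →ₗ[ℝ] (ℕ →₀ ℝ)) (j l : ℤ) : ℝ :=
  if 0 ≤ j ∧ 0 ≤ l then (T (Finsupp.single j.toNat 1)) l.toNat else 0

/-!
For large `k` the coefficient is `√ω (k+m) / s k` on the off-diagonals and
`(α (k+n) - α k) / s k` on the diagonal, where `s k = √(ω k + ω (k-1))`. The ratio condition
telescopes to `ω (k+d) / ω k → 1` for every fixed shift `d`, which gives the limit `1/√2` and
`s (k+d) / s k → 1`; the diagonal is a telescoping sum of `n` increments `α j - α (j-1)`, each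
asymptotic to `c · s j`, hence to `c · s k`.

Sequences are indexed by `ℤ` so that shifts `i + d` with `d < 0` involve no truncated
subtraction; `ω` and `α` enter as `fun i => ω i.toNat`.
-/

open Topology

section ShiftLimits

variable {W : ℤ → ℝ}

theorem tendsto_comp_add_const {β : Type*} {f : ℤ → β} {l : Filter β}
    (h : Tendsto f atTop l) (d : ℤ) : Tendsto (fun i => f (i + d)) atTop l :=
  h.comp (tendsto_atTop_add_const_right _ d tendsto_id)

theorem tendsto_shift_div_of_tendsto_div_pred (hW : ∀ i, W i ≠ 0)
    (h : Tendsto (fun i => W i / W (i - 1)) atTop (𝓝 1)) (d : ℤ) :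
    Tendsto (fun i => W (i + d) / W i) atTop (𝓝 1) := by
  induction d using Int.induction_on with
  | zero => simp [div_self (hW _)]
  | succ d ih =>
    have h' := (tendsto_comp_add_const h (d + 1)).mul ih
    rw [mul_one] at h'
    refine h'.congr fun i => ?_
    rw [show i + (d + 1) - 1 = i + d by ring, ← add_assoc, div_mul_div_cancel₀ (hW _)]
  | pred d ih =>
    have h' := ih.div (tendsto_comp_add_const h (-d)) one_ne_zero
    rw [div_one] at h'
    refine h'.congr fun i => ?_
    rw [Pi.div_apply, show i + -(d : ℤ) - 1 = i + (-d - 1) by ring,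
      div_div_div_cancel_left' _ _ (hW _)]

theorem tendsto_shift_div_add_pred (hW : ∀ i, 0 < W i)
    (h : Tendsto (fun i => W i / W (i - 1)) atTop (𝓝 1)) (d : ℤ) :
    Tendsto (fun i => W (i + d) / (W i + W (i - 1))) atTop (𝓝 (1 / 2)) := by
  have hpred : Tendsto (fun i => W (i - 1) / W i) atTop (𝓝 1) := by
    simpa [sub_eq_add_neg] using
      tendsto_shift_div_of_tendsto_div_pred (fun i => (hW i).ne') h (-1)
  have h' := (tendsto_shift_div_of_tendsto_div_pred (fun i => (hW i).ne') h d).div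
    (tendsto_const_nhds.add hpred) (by norm_num : (1 : ℝ) + 1 ≠ 0)
  rw [show (1 : ℝ) / (1 + 1) = 1 / 2 by norm_num] at h'
  refine h'.congr fun i => ?_
  have := (hW i).ne'
  simp only [Pi.div_apply]
  field_simp

noncomputable def jacobiScale (W : ℤ → ℝ) (i : ℤ) : ℝ :=
  √(W i + W (i - 1))

theorem jacobiScale_pos (hW : ∀ i, 0 < W i) (i : ℤ) : 0 < jacobiScale W i :=
  Real.sqrt_pos.mpr (add_pos (hW i) (hW (i - 1)))

theorem tendsto_sqrt_shift_div_jacobiScale (hW : ∀ i, 0 < W i)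
    (h : Tendsto (fun i => W i / W (i - 1)) atTop (𝓝 1)) (d : ℤ) :
    Tendsto (fun i => √(W (i + d)) / jacobiScale W i) atTop (𝓝 (1 / √2)) := by
  have h' := (Real.continuous_sqrt.tendsto _).comp (tendsto_shift_div_add_pred hW h d)
  rw [Real.sqrt_div' _ zero_le_two, Real.sqrt_one] at h'
  refine h'.congr fun i => ?_
  rw [Function.comp_apply, Real.sqrt_div (hW _).le, jacobiScale]

theorem tendsto_jacobiScale_div_pred (hW : ∀ i, 0 < W i)
    (h : Tendsto (fun i => W i / W (i - 1)) atTop (𝓝 1)) :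
    Tendsto (fun i => jacobiScale W i / jacobiScale W (i - 1)) atTop (𝓝 1) := by
  have hsum := tendsto_comp_add_const
    ((tendsto_shift_div_add_pred hW h 1).add (tendsto_shift_div_add_pred hW h 0)) (-1)
  have h' := (Real.continuous_sqrt.tendsto _).comp hsum
  rw [add_halves, Real.sqrt_one] at h'
  refine h'.congr fun i => ?_
  rw [Function.comp_apply, jacobiScale, jacobiScale, ← Real.sqrt_div (add_pos (hW _) (hW _)).le,
    ← add_div]
  simp only [← sub_eq_add_neg, sub_add_cancel, add_zero]

end ShiftLimits

theorem tendsto_sub_div_of_tendsto_sub_pred_div {A N : ℤ → ℝ} {c : ℝ} (hN : ∀ i, N i ≠ 0)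
    (hN1 : Tendsto (fun i => N i / N (i - 1)) atTop (𝓝 1))
    (h : Tendsto (fun i => (A i - A (i - 1)) / N i) atTop (𝓝 c)) (n : ℤ) :
    Tendsto (fun i => (A (i + n) - A i) / N i) atTop (𝓝 (c * n)) := by
  have hshift := tendsto_shift_div_of_tendsto_div_pred hN hN1
  induction n using Int.induction_on with
  | zero => simp
  | succ n ih =>
    have h' := ((tendsto_comp_add_const h (n + 1)).mul (hshift (n + 1))).add ih
    rw [show c * ((n + 1 : ℤ) : ℝ) = c * 1 + c * (n : ℤ) by push_cast; ring]
    refine h'.congr fun i => ?_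
    have := hN (i + (n + 1))
    rw [show i + (n + 1) - 1 = i + n by ring]
    field_simp
    ring
  | pred n ih =>
    have h' := ih.sub ((tendsto_comp_add_const h (-n)).mul (hshift (-n)))
    rw [show c * ((-n - 1 : ℤ) : ℝ) = c * (-n : ℤ) - c * 1 by push_cast; ring]
    refine h'.congr fun i => ?_
    have := hN (i + -n)
    rw [show i + -(n : ℤ) - 1 = i + (-n - 1) by ring]
    field_simp
    ring

theorem tendsto_jacobi_coeff_profile {W A : ℤ → ℝ} {c : ℝ} (hW : ∀ i, 0 < W i)
    (h1 : Tendsto (fun i => W i / W (i - 1)) atTop (𝓝 1))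
    (h2 : Tendsto (fun i => (A i - A (i - 1)) / jacobiScale W i) atTop (𝓝 c)) (m n : ℤ) :
    Tendsto (fun i => (if m = n - 1 then √(W (i + m)) else if m = n then A (i + m) - A i
        else if m = n + 1 then √(W (i + n)) else 0) / jacobiScale W i) atTop
      (𝓝 (if m = n - 1 then 1 / √2 else if m = n then c * n
        else if m = n + 1 then 1 / √2 else 0)) := by
  split_ifs with h₁ h₂ h₃
  · exact tendsto_sqrt_shift_div_jacobiScale hW h1 m
  · subst h₂
    exact tendsto_sub_div_of_tendsto_sub_pred_div (fun i => (jacobiScale_pos hW i).ne')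
      (tendsto_jacobiScale_div_pred hW h1) h2 m
  · exact tendsto_sqrt_shift_div_jacobiScale hW h1 n
  · simp

theorem jacobiOp_single_of_ne_zero (ω α : ℕ → ℝ) {j : ℕ} (hj : j ≠ 0) :
    jacobiOp ω α (Finsupp.single j 1) = √(ω j) • Finsupp.single (j + 1) 1 +
      α j • Finsupp.single j 1 + √(ω (j - 1)) • Finsupp.single (j - 1) 1 := by
  simp [jacobiOp, hj]

theorem matrixCoeff_smul_jacobiOp_sub (ω α : ℕ → ℝ) (r : ℝ) (k : ℕ) {m n : ℤ}
    (hm : 1 ≤ k + m) (hn : 0 ≤ k + n) :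
    matrixCoeff (r • (jacobiOp ω α - α k • 1)) (k + m) (k + n) =
      r * (if m = n - 1 then √(ω (k + m).toNat) else if m = n then α (k + m).toNat - α k
        else if m = n + 1 then √(ω (k + n).toNat) else 0) := by
  have hj : (k + m).toNat ≠ 0 := by omega
  rw [matrixCoeff, if_pos ⟨by omega, hn⟩]
  simp only [LinearMap.smul_apply, LinearMap.sub_apply, jacobiOp_single_of_ne_zero ω α hj,
    Module.End.one_apply, Finsupp.smul_apply, Finsupp.sub_apply, Finsupp.add_apply,
    Finsupp.single_apply, smul_eq_mul]
  split_ifs <;> first | omega | simp_all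

theorem RAC2_matrix_coefficient_limit (ω α : ℕ → ℝ) (hω : ∀ n, 0 < ω n) (c : ℝ)
    (h1 : Tendsto (fun n : ℕ => ω n / ω (n - 1)) atTop (nhds 1))
    (h2 : Tendsto (fun n : ℕ => (α n - α (n - 1)) / Real.sqrt (ω n + ω (n - 1)))
      atTop (nhds c))
    (m n : ℤ) :
    Tendsto
      (fun k : ℕ =>
        matrixCoeff
          ((1 / Real.sqrt (ω k + ω (k - 1))) •
            (jacobiOp ω α - α k • (1 : (ℕ →₀ ℝ) →ₗ[ℝ] (ℕ →₀ ℝ))))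
          ((k : ℤ) + m) ((k : ℤ) + n))
      atTop
      (nhds
        (if m = n - 1 then 1 / Real.sqrt 2
         else if m = n then c * n
         else if m = n + 1 then 1 / Real.sqrt 2
         else 0)) := by
  have htoNat : Tendsto Int.toNat atTop atTop :=
    tendsto_atTop_atTop.mpr fun b => ⟨b, fun i hi => by omega⟩
  have hscale (i : ℤ) : jacobiScale (fun j => ω j.toNat) i = √(ω i.toNat + ω (i.toNat - 1)) := by
    rw [jacobiScale, Int.pred_toNat]
  have h1' : Tendsto (fun i : ℤ => ω i.toNat / ω (i - 1).toNat) atTop (𝓝 1) := by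
    simpa only [Int.pred_toNat, Function.comp_def] using h1.comp htoNat
  have h2' : Tendsto (fun i : ℤ => (α i.toNat - α (i - 1).toNat) /
      jacobiScale (fun j => ω j.toNat) i) atTop (𝓝 c) := by
    simpa only [hscale, Int.pred_toNat, Function.comp_def] using h2.comp htoNat
  refine ((tendsto_jacobi_coeff_profile (fun i => hω _) h1' h2' m n).comp
    tendsto_natCast_atTop_atTop).congr' ?_
  filter_upwards [eventually_ge_atTop (m.natAbs + n.natAbs + 1)] with k hk
  rw [matrixCoeff_smul_jacobiOp_sub ω α _ k (by omega) (by omega), Function.comp_apply, hscale,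
    Int.toNat_natCast, one_div_mul_eq_div]
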